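/- Suppose f is affine on [a,b] (a < b) and U ⊆ ℝ is an open set with λ(U ∩ [a,b]) < b - a and a ∉ U, b ∉ U. Define g on [a,b] by g(x) = f(a) + (λ(([a,b]\U) ∩ [a,x]) / λ([a,b]\U))·(f(b) - f(a)). Then: (i) g is Lipschitz on [a,b]; (ii) g is constant on each open interval (r,s) contained in [a,b] ∩ U; (iii) g(a) = f(a) and g(b) = f(b); (iv) sup_{x ∈ [a,b]} |g(x) - f(x)| ≤ |f(b) - f(a)|. -/

import Mathlib

open Set Filter MeasureTheory Topology
open scoped ENNReal NNReal

/-! Writing `E = [a,b] \ U`, the function `g` is `f a + θ x * (f b - f a)` with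
`θ x = λ(E ∩ [a,x]) / λ(E)`, and `λ(E) > 0` because `U` does not fill `[a,b]`. Cumulative
measures `x ↦ λ(E ∩ [a,x])` are nondecreasing, `1`-Lipschitz and constant on intervals missing `E`,
by subadditivity alone. Since `θ` runs from `0` to `1`, and so does `(x-a)/(b-a)` in
`f x = f a + (x-a)/(b-a) * (f b - f a)`, the two functions differ by at most `|f b - f a|`. -/

/-- `M_f(x,r) = sup { |f(x)-f(y)|/r : |x-y| ≤ r }`, valued in `[0,∞]`. -/
noncomputable def Mf (f : ℝ → ℝ) (x r : ℝ) : ℝ≥0∞ :=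
  ⨆ y ∈ {y : ℝ | |x - y| ≤ r}, ENNReal.ofReal (|f x - f y| / r)

/-- The big Lip function: `Lip f(x) = limsup_{r→0⁺} M_f(x,r)`. -/
noncomputable def bigLip (f : ℝ → ℝ) (x : ℝ) : ℝ≥0∞ :=
  Filter.limsup (fun r => Mf f x r) (𝓝[>] (0 : ℝ))

/-- The little lip function: `lip f(x) = liminf_{r→0⁺} M_f(x,r)`. -/
noncomputable def litLip (f : ℝ → ℝ) (x : ℝ) : ℝ≥0∞ :=
  Filter.liminf (fun r => Mf f x r) (𝓝[>] (0 : ℝ))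

/-- A set `E ⊆ ℝ` is trim if `λ(E ∩ (a,b)) < b - a` for every open interval `(a,b)`. -/
def Trim (E : Set ℝ) : Prop :=
  ∀ a b : ℝ, a < b → volume (E ∩ Ioo a b) < ENNReal.ofReal (b - a)

lemma volume_inter_Icc_ne_top (E : Set ℝ) (a x : ℝ) : volume (E ∩ Icc a x) ≠ ∞ :=
  measure_ne_top_of_subset inter_subset_right (by simp [Real.volume_Icc])

noncomputable def cumulativeVolume (E : Set ℝ) (a x : ℝ) : ℝ :=
  (volume (E ∩ Icc a x)).toReal

namespace cumulativeVolume

variable (E : Set ℝ) (a : ℝ)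

lemma nonneg (x : ℝ) : 0 ≤ cumulativeVolume E a x := ENNReal.toReal_nonneg

lemma monotone : Monotone (cumulativeVolume E a) := fun _ _ hxy =>
  ENNReal.toReal_mono (volume_inter_Icc_ne_top E a _)
    (measure_mono (inter_subset_inter_right _ (Icc_subset_Icc_right hxy)))

lemma self_eq_zero : cumulativeVolume E a a = 0 := by
  simp [cumulativeVolume, Icc_self,
    measure_mono_null inter_subset_right (Real.volume_singleton (a := a))]

lemma eq_toReal_volume {b : ℝ} (hE : E ⊆ Icc a b) :
    cumulativeVolume E a b = (volume E).toReal := by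
  rw [cumulativeVolume, inter_eq_left.mpr hE]

lemma le_add_toReal_volume_Ioc (x y : ℝ) :
    cumulativeVolume E a y ≤ cumulativeVolume E a x + (volume (E ∩ Ioc x y)).toReal := by
  have hcover : E ∩ Icc a y ⊆ (E ∩ Icc a x) ∪ (E ∩ Ioc x y) := by
    rintro z ⟨hzE, haz, hzy⟩
    rcases le_or_gt z x with hzx | hxz
    · exact Or.inl ⟨hzE, haz, hzx⟩
    · exact Or.inr ⟨hzE, hxz, hzy⟩
  exact ENNReal.toReal_le_add ((measure_mono hcover).trans (measure_union_le _ _))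
    (volume_inter_Icc_ne_top E a x) (measure_ne_top_of_subset inter_subset_right (by simp))

lemma lipschitzWith_one : LipschitzWith 1 (cumulativeVolume E a) := by
  refine LipschitzWith.of_le_add fun x y => ?_
  rcases le_total x y with hxy | hyx
  · exact (monotone E a hxy).trans (le_add_of_nonneg_right dist_nonneg)
  · calc cumulativeVolume E a x
        ≤ cumulativeVolume E a y + (volume (E ∩ Ioc y x)).toReal :=
          le_add_toReal_volume_Ioc E a y x
      _ ≤ cumulativeVolume E a y + (volume (Ioc y x)).toReal := by
          gcongr
          · simp
          · exact inter_subset_right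
      _ = cumulativeVolume E a y + dist x y := by
          rw [Real.volume_Ioc, ENNReal.toReal_ofReal (sub_nonneg.mpr hyx), Real.dist_eq,
            abs_of_nonneg (sub_nonneg.mpr hyx)]

lemma eq_of_disjoint_Ioo {r s : ℝ} (hE : Disjoint E (Ioo r s)) {x y : ℝ}
    (hx : x ∈ Ioo r s) (hy : y ∈ Ioo r s) : cumulativeVolume E a x = cumulativeVolume E a y := by
  have hle : ∀ u ∈ Ioo r s, ∀ v ∈ Ioo r s, cumulativeVolume E a v ≤ cumulativeVolume E a u := by
    intro u hu v hv
    have hnull : E ∩ Ioc u v = ∅ :=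
      (hE.mono_right fun z hz => ⟨hu.1.trans hz.1, hz.2.trans_lt hv.2⟩).inter_eq
    simpa [hnull] using le_add_toReal_volume_Ioc E a u v
  exact le_antisymm (hle y hy x hx) (hle x hx y hy)

end cumulativeVolume

lemma LipschitzWith.const_add_mul_const {α : Type*} [PseudoMetricSpace α] {φ : α → ℝ} {K : ℝ≥0}
    (hφ : LipschitzWith K φ) (c d : ℝ) : LipschitzWith (K * ‖d‖₊) fun x => c + φ x * d := by
  refine LipschitzWith.of_dist_le_mul fun x y => ?_
  rw [Real.dist_eq, add_sub_add_left_eq_sub, ← sub_mul, abs_mul, ← Real.dist_eq, NNReal.coe_mul,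
    coe_nnnorm, Real.norm_eq_abs, mul_right_comm]
  exact mul_le_mul_of_nonneg_right (hφ.dist_le_mul x y) (abs_nonneg d)

lemma toReal_measure_sdiff_pos {α : Type*} [MeasurableSpace α] {μ : Measure α} {s U : Set α}
    (hs : μ s ≠ ∞) (hU : μ (U ∩ s) < μ s) : 0 < (μ (s \ U)).toReal := by
  refine ENNReal.toReal_pos (fun h0 => hU.not_ge ?_) (measure_ne_top_of_subset sdiff_subset hs)
  simpa [h0, inter_comm] using measure_le_inter_add_sdiff μ s U

lemma abs_sub_mul_le_abs {θ t : ℝ} (hθ : θ ∈ Icc (0 : ℝ) 1) (ht : t ∈ Icc (0 : ℝ) 1) (d : ℝ) :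
    |(θ - t) * d| ≤ |d| := by
  rw [abs_mul]
  refine mul_le_of_le_one_left (abs_nonneg d) (abs_le.mpr ⟨?_, ?_⟩) <;>
    linarith [hθ.1, hθ.2, ht.1, ht.2]

theorem trim_replacement_lemma (f g : ℝ → ℝ) (a b : ℝ) (hab : a < b) (m : ℝ)
    (hf : ∀ x ∈ Icc a b, f x = f a + m * (x - a))
    (U : Set ℝ)
    (hUmeas : volume (U ∩ Icc a b) < ENNReal.ofReal (b - a))
    (hg : ∀ x ∈ Icc a b,
      g x = f a + (volume ((Icc a b \ U) ∩ Icc a x)).toReal /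
        (volume (Icc a b \ U)).toReal * (f b - f a)) :
    (∃ K : ℝ≥0, LipschitzOnWith K g (Icc a b)) ∧
    (∀ r s : ℝ, Ioo r s ⊆ Icc a b ∩ U → ∀ x ∈ Ioo r s, ∀ y ∈ Ioo r s, g x = g y) ∧
    (g a = f a ∧ g b = f b) ∧
    (∀ x ∈ Icc a b, |g x - f x| ≤ |f b - f a|) := by
  set E := Icc a b \ U
  set T := (volume E).toReal
  have hT : 0 < T :=
    toReal_measure_sdiff_pos (by simp [Real.volume_Icc]) (by rwa [Real.volume_Icc])
  have hTb : cumulativeVolume E a b = T := cumulativeVolume.eq_toReal_volume E a sdiff_subset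
  have hgE : ∀ x ∈ Icc a b, g x = f a + cumulativeVolume E a x / T * (f b - f a) := hg
  have hlip := (cumulativeVolume.lipschitzWith_one E a).const_add_mul_const (f a) ((f b - f a) / T)
  simp only [mul_div_assoc', ← div_mul_eq_mul_div] at hlip
  refine ⟨⟨_, fun x hx y hy => by rw [hgE x hx, hgE y hy]; exact hlip x y⟩,
    fun r s hrs x hx y hy => ?_, ?_, fun x hx => ?_⟩
  · have hdisj : Disjoint E (Ioo r s) := disjoint_left.mpr fun z hzE hz => hzE.2 (hrs hz).2
    rw [hgE x (hrs hx).1, hgE y (hrs hy).1, cumulativeVolume.eq_of_disjoint_Ioo E a hdisj hx hy]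
  · rw [hgE a (left_mem_Icc.mpr hab.le), hgE b (right_mem_Icc.mpr hab.le),
      cumulativeVolume.self_eq_zero, hTb, div_self hT.ne']
    constructor <;> ring
  · have hslope : f b - f a = m * (b - a) := by rw [hf b (right_mem_Icc.mpr hab.le)]; ring
    have hfx : f x = f a + (x - a) / (b - a) * (f b - f a) := by
      rw [hf x hx, hslope]; field_simp [(sub_pos.mpr hab).ne']
    rw [hgE x hx, hfx, add_sub_add_left_eq_sub, ← sub_mul]
    exact abs_sub_mul_le_abs
      (unitInterval.div_mem (cumulativeVolume.nonneg E a x) hT.le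
        (hTb ▸ cumulativeVolume.monotone E a hx.2))
      (unitInterval.div_mem (sub_nonneg.mpr hx.1) (sub_pos.mpr hab).le (sub_le_sub_right hx.2 a))
      _
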